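/- arXiv:1110.1475 — 3 statements merged into one kernel-verified Lean document; each statement's English description precedes it below -/
import Mathlib

section
/- Let V be a real vector space with a symmetric bilinear form g, let S be a nontrivial complex vector space, and let c : V → End(S) be an ℝ-linear map satisfying the Clifford relation c(v)∘c(w) + c(w)∘c(v) = −2·g(v,w)·Id for all v,w ∈ V. Let N, Y ∈ V with g(Y,N) = 0, let a, b ∈ ℝ, and set Z = a·Y + b·N. Suppose T : S → S is an invertible linear endomorphism such that T∘c(v) = −c(v)∘T for every v ∈ V with g(v,N) = 0, and T∘c(N) = c(N)∘T. Then (T⁻¹ ∘ c(a·Y − b·N) ∘ T) ∘ c(Z) = g(Z,Z)·Id on S. (This is the symbol identity σ̃(ξ)∘σ_D(ξ) = ‖ξ‖²_g·Id, with σ_D(ξ) = i·c(Z) and σ̃(ξ) = −i·T⁻¹∘c(aY−bN)∘T, proving that the generalized Dirac operator is of real principal type.) -/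
/-- The symbol identity `σ̃(ξ) ∘ σ_D(ξ) = ‖ξ‖²_g · Id` for the generalized
Dirac operator: with `Z = a•Y + b•N`, `g Y N = 0`, and `T` an invertible endomorphism
anticommuting with Clifford multiplication by vectors orthogonal to `N` and commuting with
Clifford multiplication by `N`, we have `(T⁻¹ ∘ c(a•Y − b•N) ∘ T) ∘ c(Z) = g(Z,Z) • Id`. -/
theorem generalized_dirac_real_principal_type
    {V : Type*} [AddCommGroup V] [Module ℝ V]
    {S : Type*} [AddCommGroup S] [Module ℝ S] [Module ℂ S] [IsScalarTower ℝ ℂ S]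
    [Nontrivial S]
    (g : LinearMap.BilinForm ℝ V) (hg_symm : ∀ v w : V, g v w = g w v)
    (c : V →ₗ[ℝ] Module.End ℂ S)
    (hc : ∀ v w : V, c v * c w + c w * c v = (-(2 * g v w)) • (1 : Module.End ℂ S))
    (N Y : V) (hYN : g Y N = 0) (a b : ℝ) (Z : V) (hZ : Z = a • Y + b • N)
    (T : (Module.End ℂ S)ˣ)
    (hT_anti : ∀ v : V, g v N = 0 →
      (T : Module.End ℂ S) * c v = -(c v * (T : Module.End ℂ S)))
    (hT_comm : (T : Module.End ℂ S) * c N = c N * (T : Module.End ℂ S)) :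
    ((T⁻¹ : (Module.End ℂ S)ˣ) : Module.End ℂ S) * c (a • Y - b • N) * (T : Module.End ℂ S)
        * c Z
      = g Z Z • (1 : Module.End ℂ S) := by
  have hY := hT_anti Y hYN
  -- c(Y) * T = - T * c(Y)
  have hY' : c Y * (T : Module.End ℂ S) = -((T : Module.End ℂ S) * c Y) := by
    rw [hY, neg_neg]
  have h1 : c (a • Y - b • N) * (T : Module.End ℂ S)
      = (T : Module.End ℂ S) * (-(c Z)) := by
    rw [hZ, map_sub, map_smul, map_smul, map_add, map_smul, map_smul]
    simp only [sub_mul, smul_mul_assoc, hY', hT_comm]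
    simp only [mul_smul_comm, mul_neg, mul_add, neg_add, smul_neg, neg_sub, hT_comm]
    abel
  have key : ((T⁻¹ : (Module.End ℂ S)ˣ) : Module.End ℂ S) * c (a • Y - b • N)
      * (T : Module.End ℂ S) = -(c Z) := by
    rw [mul_assoc, h1, ← mul_assoc, ← Units.val_mul, inv_mul_cancel, Units.val_one, one_mul]
  rw [key]
  have h2 : (2 : ℝ) • (c Z * c Z) = (-(2 * g Z Z)) • (1 : Module.End ℂ S) := by
    rw [two_smul]; exact hc Z Z
  have h3 : c Z * c Z = (-(g Z Z)) • (1 : Module.End ℂ S) := by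
    have := congrArg (fun x => (2⁻¹ : ℝ) • x) h2
    simpa [smul_smul] using this
  rw [neg_mul, h3]; simp
end

section
/- Let V = ℝ^{n+1} with n ≥ 1, equipped with the Minkowski bilinear form g(x,y) = x₀y₀ − Σ_{i=1}^{n} xᵢyᵢ. Let S be a finite-dimensional complex vector space, let c : V → End(S) be an ℝ-linear map satisfying c(v)∘c(w) + c(w)∘c(v) = −2·g(v,w)·Id for all v,w ∈ V, let k ≥ 1, and let Q : V^k → End(S) be a symmetric ℝ-multilinear map; write Q_N := Q(N,…,N). Assume that for every future-directed timelike vector N (i.e. g(N,N) > 0 and N₀ > 0) and every v ∈ V with g(v,N) = 0 one has c(v)∘Q_N = −Q_N∘c(v). Then for ALL vectors Y, Z ∈ V with g(Y,Z) = 0 one has c(Z)∘Q_Y = −Q_Y∘c(Z). -/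
open Finset

section AuxPF
variable {M : Type*} [AddCommGroup M] [Module ℝ M]

/-- Auxiliary: `f : ℝ → M` is a polynomial function with values in a real vector space. -/
def AuxIsPF (f : ℝ → M) : Prop :=
  ∃ m : ℕ, ∃ C : ℕ → M, ∀ t : ℝ, f t = ∑ j ∈ Finset.range m, t ^ j • C j

lemma AuxIsPF.extend {f : ℝ → M} {m : ℕ} {C : ℕ → M}
    (h : ∀ t : ℝ, f t = ∑ j ∈ Finset.range m, t ^ j • C j) {m' : ℕ} (hm : m ≤ m') :
    ∀ t : ℝ, f t = ∑ j ∈ Finset.range m', t ^ j • (if j < m then C j else 0) := by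
  intro t
  rw [h t, ← Finset.sum_subset (Finset.range_subset_range.2 hm)]
  · exact Finset.sum_congr rfl (fun j hj => by
      rw [if_pos (Finset.mem_range.1 hj)])
  · intro j _ hj
    rw [if_neg (fun h' => hj (Finset.mem_range.2 h')), smul_zero]

lemma AuxIsPF.const (a : M) : AuxIsPF (fun _ : ℝ => a) :=
  ⟨1, fun _ => a, fun t => by simp⟩

lemma AuxIsPF.add {f g : ℝ → M} (hf : AuxIsPF f) (hg : AuxIsPF g) :
    AuxIsPF (fun t => f t + g t) := by
  obtain ⟨m1, C, hC⟩ := hf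
  obtain ⟨m2, D, hD⟩ := hg
  refine ⟨max m1 m2, fun j => (if j < m1 then C j else 0) + (if j < m2 then D j else 0),
    fun t => ?_⟩
  dsimp only
  rw [AuxIsPF.extend hC (le_max_left m1 m2) t, AuxIsPF.extend hD (le_max_right m1 m2) t,
    ← Finset.sum_add_distrib]
  exact Finset.sum_congr rfl (fun j _ => (smul_add _ _ _).symm)

lemma AuxIsPF.neg {f : ℝ → M} (hf : AuxIsPF f) : AuxIsPF (fun t => -(f t)) := by
  obtain ⟨m, C, hC⟩ := hf
  exact ⟨m, fun j => -(C j), fun t => by simp [hC t]⟩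

lemma AuxIsPF.sub {f g : ℝ → M} (hf : AuxIsPF f) (hg : AuxIsPF g) :
    AuxIsPF (fun t => f t - g t) := by
  simpa [sub_eq_add_neg] using hf.add hg.neg

lemma AuxIsPF.smul {f : ℝ → ℝ} {g : ℝ → M} (hf : AuxIsPF f) (hg : AuxIsPF g) :
    AuxIsPF (fun t => f t • g t) := by
  obtain ⟨m1, C, hC⟩ := hf
  obtain ⟨m2, D, hD⟩ := hg
  refine ⟨m1 + m2, fun l => ∑ i ∈ Finset.range m1, ∑ j ∈ Finset.range m2,
    if i + j = l then C i • D j else 0, fun t => ?_⟩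
  dsimp only
  rw [hC t, hD t]
  have L : (∑ i ∈ Finset.range m1, t ^ i • C i) • (∑ j ∈ Finset.range m2, t ^ j • D j)
      = ∑ i ∈ Finset.range m1, ∑ j ∈ Finset.range m2, t ^ (i + j) • (C i • D j) := by
    rw [Finset.sum_smul]
    refine Finset.sum_congr rfl (fun i _ => ?_)
    rw [Finset.smul_sum]
    refine Finset.sum_congr rfl (fun j _ => ?_)
    simp only [smul_smul, smul_eq_mul, pow_add]
    congr 1
    ring
  have R : (∑ l ∈ Finset.range (m1 + m2), t ^ l • ∑ i ∈ Finset.range m1, ∑ j ∈ Finset.range m2,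
        (if i + j = l then C i • D j else 0))
      = ∑ i ∈ Finset.range m1, ∑ j ∈ Finset.range m2, t ^ (i + j) • (C i • D j) := by
    simp_rw [Finset.smul_sum, smul_ite, smul_zero]
    rw [Finset.sum_comm]
    refine Finset.sum_congr rfl (fun i hi => ?_)
    rw [Finset.sum_comm]
    refine Finset.sum_congr rfl (fun j hj => ?_)
    rw [Finset.sum_ite_eq (Finset.range (m1 + m2)) (i + j)]
    rw [if_pos (Finset.mem_range.2 (by
      have := Finset.mem_range.1 hi; have := Finset.mem_range.1 hj; omega))]
  exact L.trans R.symm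

lemma AuxIsPF.mul {M : Type*} [Ring M] [Module ℝ M] [SMulCommClass ℝ M M] [IsScalarTower ℝ M M]
    {f g : ℝ → M} (hf : AuxIsPF f) (hg : AuxIsPF g) :
    AuxIsPF (fun t => f t * g t) := by
  obtain ⟨m1, C, hC⟩ := hf
  obtain ⟨m2, D, hD⟩ := hg
  refine ⟨m1 + m2, fun l => ∑ i ∈ Finset.range m1, ∑ j ∈ Finset.range m2,
    if i + j = l then C i * D j else 0, fun t => ?_⟩
  dsimp only
  rw [hC t, hD t]
  have L : (∑ i ∈ Finset.range m1, t ^ i • C i) * (∑ j ∈ Finset.range m2, t ^ j • D j)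
      = ∑ i ∈ Finset.range m1, ∑ j ∈ Finset.range m2, t ^ (i + j) • (C i * D j) := by
    rw [Finset.sum_mul]
    refine Finset.sum_congr rfl (fun i _ => ?_)
    rw [Finset.mul_sum]
    refine Finset.sum_congr rfl (fun j _ => ?_)
    rw [smul_mul_assoc, mul_smul_comm, smul_smul, ← pow_add]
  have R : (∑ l ∈ Finset.range (m1 + m2), t ^ l • ∑ i ∈ Finset.range m1, ∑ j ∈ Finset.range m2,
        (if i + j = l then C i * D j else 0))
      = ∑ i ∈ Finset.range m1, ∑ j ∈ Finset.range m2, t ^ (i + j) • (C i * D j) := by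
    simp_rw [Finset.smul_sum, smul_ite, smul_zero]
    rw [Finset.sum_comm]
    refine Finset.sum_congr rfl (fun i hi => ?_)
    rw [Finset.sum_comm]
    refine Finset.sum_congr rfl (fun j hj => ?_)
    rw [Finset.sum_ite_eq (Finset.range (m1 + m2)) (i + j)]
    rw [if_pos (Finset.mem_range.2 (by
      have := Finset.mem_range.1 hi; have := Finset.mem_range.1 hj; omega))]
  exact L.trans R.symm

lemma AuxIsPF.vanish {f : ℝ → M} (hf : AuxIsPF f)
    (h : {t : ℝ | f t = 0}.Infinite) : ∀ t, f t = 0 := by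
  obtain ⟨m, C, hC⟩ := hf
  intro t
  rw [← Module.forall_dual_apply_eq_zero_iff ℝ]
  intro φ
  set p : Polynomial ℝ := ∑ j ∈ Finset.range m, Polynomial.C (φ (C j)) * Polynomial.X ^ j with hp
  have heval : ∀ s : ℝ, p.eval s = φ (f s) := by
    intro s
    rw [hC s, map_sum, hp, Polynomial.eval_finset_sum]
    exact Finset.sum_congr rfl (fun j _ => by
      rw [Polynomial.eval_mul, Polynomial.eval_C, Polynomial.eval_pow, Polynomial.eval_X,
        map_smul, smul_eq_mul, mul_comm])
  have hp0 : p = 0 := by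
    apply Polynomial.eq_zero_of_infinite_isRoot
    apply Set.Infinite.mono _ h
    intro s hs
    simp only [Set.mem_setOf_eq] at hs ⊢
    rw [Polynomial.IsRoot, heval, hs, map_zero]
  have := heval t
  rw [hp0] at this
  simpa using this.symm

lemma AuxIsPF.multi {k d : ℕ}
    (Q : MultilinearMap ℝ (fun _ : Fin k => (Fin d → ℝ)) M) (a b : Fin d → ℝ) :
    AuxIsPF (fun t => Q (fun _ => a + t • b)) := by
  classical
  refine ⟨k + 1, fun j => ∑ s ∈ Finset.univ.filter (fun s : Finset (Fin k) => sᶜ.card = j),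
    Q (sᶜ.piecewise (fun _ => b) (fun _ => a)), fun t => ?_⟩
  dsimp only
  have h1 : (fun _ : Fin k => a + t • b)
      = (fun _ : Fin k => a) + (fun _ : Fin k => t • b) := rfl
  rw [h1, Q.map_add_univ]
  have h2 : ∀ s : Finset (Fin k),
      Q (s.piecewise (fun _ => a) (fun _ => t • b))
        = t ^ sᶜ.card • Q (sᶜ.piecewise (fun _ => b) (fun _ => a)) := by
    intro s
    have e1 : s.piecewise (fun _ : Fin k => a) (fun _ => t • b)
        = sᶜ.piecewise (fun i => t • (sᶜ.piecewise (fun _ : Fin k => b) (fun _ => a)) i)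
            (sᶜ.piecewise (fun _ => b) (fun _ => a)) := by
      ext i x
      by_cases hi : i ∈ s <;>
        simp [Finset.piecewise, hi]
    rw [e1]
    have := Q.map_piecewise_smul (fun _ => t)
      (sᶜ.piecewise (fun _ : Fin k => b) (fun _ => a)) sᶜ
    rw [this]
    simp
  simp_rw [h2]
  rw [← Finset.sum_fiberwise_of_maps_to (g := fun s : Finset (Fin k) => sᶜ.card)
    (t := Finset.range (k + 1)) (fun s _ => Finset.mem_range.2 (Nat.lt_succ_of_le (by
      simpa using Finset.card_le_card (Finset.subset_univ sᶜ))))]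
  refine Finset.sum_congr rfl (fun j _ => ?_)
  rw [Finset.smul_sum]
  refine Finset.sum_congr rfl (fun s hs => ?_)
  rw [(Finset.mem_filter.1 hs).2]

end AuxPF

/-- On Minkowski space `ℝ^{n+1}` (n ≥ 1) with a Clifford action `c` on a
finite-dimensional complex vector space `S` and a symmetric multilinear `Q : V^k → End(S)`,
if Clifford multiplication by any vector orthogonal to a future-directed timelike vector `N`
anticommutes with `Q_N := Q(N,…,N)` (axiom C7(1)), then for ALL vectors `Y, Z` with
`g(Y,Z) = 0` one has `c(Z) ∘ Q_Y = −Q_Y ∘ c(Z)` (property C7'(1)). -/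
theorem C7_anticommute_extends_to_all_orthogonal_pairs
    {n k : ℕ} (hn : 1 ≤ n) (hk : 1 ≤ k)
    {S : Type*} [AddCommGroup S] [Module ℝ S] [Module ℂ S] [IsScalarTower ℝ ℂ S]
    [FiniteDimensional ℂ S]
    (g : (Fin (n + 1) → ℝ) → (Fin (n + 1) → ℝ) → ℝ)
    (hg : ∀ x y : Fin (n + 1) → ℝ, g x y = x 0 * y 0 - ∑ i : Fin n, x i.succ * y i.succ)
    (c : (Fin (n + 1) → ℝ) →ₗ[ℝ] Module.End ℂ S)
    (hc : ∀ v w : Fin (n + 1) → ℝ,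
      c v * c w + c w * c v = (-(2 * g v w)) • (1 : Module.End ℂ S))
    (Q : MultilinearMap ℝ (fun _ : Fin k => (Fin (n + 1) → ℝ)) (Module.End ℂ S))
    (hQ_symm : ∀ (σ : Equiv.Perm (Fin k)) (v : Fin k → Fin (n + 1) → ℝ), Q (v ∘ σ) = Q v)
    (hC7 : ∀ N : Fin (n + 1) → ℝ, g N N > 0 → N 0 > 0 →
      ∀ v : Fin (n + 1) → ℝ, g v N = 0 →
        c v * Q (fun _ => N) = -(Q (fun _ => N) * c v)) :
    ∀ Y Z : Fin (n + 1) → ℝ, g Y Z = 0 →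
      c Z * Q (fun _ => Y) = -(Q (fun _ => Y) * c Z) := by
  classical
  -- basic bilinearity facts about `g`
  have gsymm : ∀ x y, g x y = g y x := by
    intro x y
    simp only [hg, mul_comm]
  have gaddl : ∀ x y z, g (x + y) z = g x z + g y z := by
    intro x y z
    simp only [hg, Pi.add_apply, add_mul, Finset.sum_add_distrib]
    ring
  have gsmull : ∀ (r : ℝ) x y, g (r • x) y = r * g x y := by
    intro r x y
    simp only [hg, Pi.smul_apply, smul_eq_mul, mul_assoc, Finset.mul_sum, mul_sub]
  have gsmulr : ∀ (r : ℝ) x y, g x (r • y) = r * g x y := by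
    intro r x y
    rw [gsymm, gsmull, gsymm]
  have gaddr : ∀ x y z, g x (y + z) = g x y + g x z := by
    intro x y z
    rw [gsymm, gaddl, gsymm, gsymm z]
  have gsubl : ∀ (x : Fin (n+1) → ℝ) (r : ℝ) y z, g (x - r • y) z = g x z - r * g y z := by
    intro x r y z
    rw [sub_eq_add_neg, ← neg_smul, gaddl, gsmull]
    ring
  have gsubr : ∀ (x : Fin (n+1) → ℝ) (r : ℝ) (y z : Fin (n+1) → ℝ),
      g x (y - r • z) = g x y - r * g x z := by
    intro x r y z
    rw [gsymm, gsubl, gsymm, gsymm z x]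
  have gexp2 : ∀ (x y z : Fin (n+1) → ℝ) (t : ℝ), g (x + t • y) z = g x z + t * g y z := by
    intro x y z t
    rw [gaddl, gsmull]
  have gexp : ∀ (x y : Fin (n+1) → ℝ) (t : ℝ),
      g (x + t • y) (x + t • y) = g x x + 2 * t * g x y + t ^ 2 * g y y := by
    intro x y t
    simp only [gaddl, gaddr, gsmull, gsmulr]
    rw [gsymm y x]
    ring
  -- the vector e₀ and the "conjugation" map W
  set e₀ : Fin (n + 1) → ℝ := fun i => if i = 0 then 1 else 0 with he₀
  have ge0r : ∀ x, g x e₀ = x 0 := by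
    intro x
    simp [hg, he₀, Fin.succ_ne_zero]
  have ge0l : ∀ x, g e₀ x = x 0 := fun x => by rw [gsymm, ge0r]
  set W : (Fin (n + 1) → ℝ) → (Fin (n + 1) → ℝ) :=
    fun v => fun i => if i = 0 then v 0 else -(v i) with hW
  have hgW : ∀ v, g v (W v) = v 0 * v 0 + ∑ i : Fin n, v i.succ * v i.succ := by
    intro v
    simp [hg, hW, Fin.succ_ne_zero, mul_neg, sub_neg_eq_add, Finset.sum_neg_distrib]
  have hWzero : ∀ v : Fin (n + 1) → ℝ, g v (W v) = 0 → v = 0 := by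
    intro v hv
    rw [hgW] at hv
    have h1 : (0:ℝ) ≤ v 0 * v 0 := mul_self_nonneg _
    have h2 : (0:ℝ) ≤ ∑ i : Fin n, v i.succ * v i.succ :=
      Finset.sum_nonneg (fun i _ => mul_self_nonneg _)
    have h3 : v 0 * v 0 = 0 := by linarith
    have h4 : ∑ i : Fin n, v i.succ * v i.succ = 0 := by linarith
    have h5 : ∀ i : Fin n, v i.succ = 0 := by
      intro i
      have := (Finset.sum_eq_zero_iff_of_nonneg
        (fun i _ => mul_self_nonneg (v i.succ))).1 h4 i (Finset.mem_univ i)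
      exact mul_self_eq_zero.1 this
    funext j
    refine Fin.cases ?_ ?_ j
    · exact mul_self_eq_zero.1 h3
    · exact h5
  have hWne : ∀ v : Fin (n + 1) → ℝ, v ≠ 0 → g v (W v) ≠ 0 :=
    fun v hv h => hv (hWzero v h)
  -- Step A: decomposition along a future-directed timelike vector
  have keyA : ∀ N : Fin (n+1) → ℝ, 0 < g N N → 0 < N 0 → ∀ w : Fin (n+1) → ℝ,
      g N N • (c w * Q (fun _ => N) + Q (fun _ => N) * c w)
        = g N w • (c N * Q (fun _ => N) + Q (fun _ => N) * c N) := by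
    intro N h1 h2 w
    set QN := Q (fun _ => N) with hQN
    set lam : ℝ := g N w / g N N with hlam
    set v : Fin (n+1) → ℝ := w - lam • N with hv
    have hvN : g v N = 0 := by
      rw [hv, gsubl, hlam, div_mul_cancel₀ _ (ne_of_gt h1), gsymm, sub_self]
    have hanti := hC7 N h1 h2 v hvN
    have hAv : c v * QN + QN * c v = 0 := by
      rw [hanti, neg_add_cancel]
    have hw : w = v + lam • N := by
      rw [hv]; abel
    have hcw : c w = c v + lam • c N := by
      rw [hw, map_add, map_smul]
    have hsplit : c w * QN + QN * c w
        = (c v * QN + QN * c v) + lam • (c N * QN + QN * c N) := by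
      rw [hcw, add_mul, mul_add, smul_mul_assoc, mul_smul_comm, smul_add]
      abel
    rw [hsplit, hAv, zero_add, smul_smul, hlam, mul_div_cancel₀ _ (ne_of_gt h1)]
  -- Step B (key2): polynomial identity for all pairs
  have key2 : ∀ U w : Fin (n+1) → ℝ,
      g U U • (c w * Q (fun _ => U) + Q (fun _ => U) * c w)
        = g U w • (c U * Q (fun _ => U) + Q (fun _ => U) * c U) := by
    intro U w
    set f : ℝ → Module.End ℂ S := fun t =>
      g (U + t • e₀) (U + t • e₀) •
          (c w * Q (fun _ => U + t • e₀) + Q (fun _ => U + t • e₀) * c w)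
        - g (U + t • e₀) w •
          (c (U + t • e₀) * Q (fun _ => U + t • e₀)
            + Q (fun _ => U + t • e₀) * c (U + t • e₀)) with hf
    have hPF : AuxIsPF f := by
      have hQm : AuxIsPF (fun t => Q (fun _ => U + t • e₀)) := AuxIsPF.multi Q U e₀
      have hq1 : AuxIsPF (fun t => g (U + t • e₀) (U + t • e₀)) := by
        refine ⟨3, fun j => if j = 0 then g U U else if j = 1 then 2 * g U e₀
          else if j = 2 then g e₀ e₀ else 0, fun t => ?_⟩
        dsimp only
        rw [gexp]
        simp [Finset.sum_range_succ]
        ring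
      have hq2 : AuxIsPF (fun t => g (U + t • e₀) w) := by
        refine ⟨2, fun j => if j = 0 then g U w else if j = 1 then g e₀ w else 0, fun t => ?_⟩
        dsimp only
        rw [gexp2]
        simp [Finset.sum_range_succ]
      have hcN : AuxIsPF (fun t => c (U + t • e₀)) := by
        refine ⟨2, fun j => if j = 0 then c U else if j = 1 then c e₀ else 0, fun t => ?_⟩
        simp [Finset.sum_range_succ, map_add, map_smul]
      have hA1 : AuxIsPF (fun t =>
          c w * Q (fun _ => U + t • e₀) + Q (fun _ => U + t • e₀) * c w) :=
        ((AuxIsPF.const (c w)).mul hQm).add (hQm.mul (AuxIsPF.const (c w)))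
      have hA2 : AuxIsPF (fun t =>
          c (U + t • e₀) * Q (fun _ => U + t • e₀)
            + Q (fun _ => U + t • e₀) * c (U + t • e₀)) :=
        (hcN.mul hQm).add (hQm.mul hcN)
      exact (hq1.smul hA1).sub (hq2.smul hA2)
    have hvan : ∀ t : ℝ, 2 * |U 0| + |g U U| + 2 < t → f t = 0 := by
      intro t ht
      have ha1 : |U 0| ≥ 0 := abs_nonneg _
      have ha2 : |g U U| ≥ 0 := abs_nonneg _
      have hb1 : -(|U 0|) ≤ U 0 := neg_abs_le _
      have hb2 : -(|g U U|) ≤ g U U := neg_abs_le _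
      have hNt : 0 < g (U + t • e₀) (U + t • e₀) := by
        rw [gexp]
        rw [ge0r]
        have hgee : g e₀ e₀ = 1 := by rw [ge0r]; simp [he₀]
        rw [hgee]
        nlinarith
      have hN0 : 0 < (U + t • e₀) 0 := by
        have he : e₀ 0 = 1 := by simp [he₀]
        simp only [Pi.add_apply, Pi.smul_apply, he, smul_eq_mul, mul_one]
        linarith
      have := keyA (U + t • e₀) hNt hN0 w
      rw [hf]
      dsimp only
      rw [this, sub_self]
    have hinf : {t : ℝ | f t = 0}.Infinite := by
      apply Set.Infinite.mono (s := Set.Ioi (2 * |U 0| + |g U U| + 2))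
      · intro t ht
        exact hvan t ht
      · exact Set.Ioi_infinite _
    have h0 := hPF.vanish hinf 0
    rw [hf] at h0
    dsimp only at h0
    simp only [zero_smul, add_zero] at h0
    exact sub_eq_zero.1 h0
  -- main argument
  intro Y Z hYZ
  set QY := Q (fun _ => Y) with hQY
  suffices hsuf : c Z * QY + QY * c Z = 0 by
    exact eq_neg_of_add_eq_zero_left hsuf
  by_cases hY0 : Y = 0
  · have : QY = 0 := by
      rw [hQY, hY0]
      exact Q.map_coord_zero (⟨0, hk⟩ : Fin k) rfl
    rw [this, mul_zero, zero_mul, add_zero]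
  by_cases hYY : g Y Y = 0
  · -- Y is null and nonzero
    have hAYY : c Y * QY + QY * c Y = 0 := by
      have h := key2 Y (W Y)
      rw [hYY, zero_smul] at h
      have hWY := hWne Y hY0
      rcases smul_eq_zero.1 h.symm with h' | h'
      · exact absurd h' hWY
      · exact h'
    by_cases hZ0 : Z = 0
    · rw [hZ0, map_zero, zero_mul, mul_zero, add_zero]
    by_cases hu : ∃ u : Fin (n+1) → ℝ, g u Z = 0 ∧ g Y u ≠ 0
    · obtain ⟨u, hu1, hu2⟩ := hu
      set u' : Fin (n+1) → ℝ := (g Y u)⁻¹ • u with hu'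
      have hu'Z : g u' Z = 0 := by
        rw [hu', gsmull, hu1, mul_zero]
      have hYu' : g Y u' = 1 := by
        rw [hu', gsmulr, inv_mul_cancel₀ hu2]
      set δ : ℝ := 1 / (|g u' u'| + 1) with hδ
      have hδpos : 0 < δ := by
        rw [hδ]
        positivity
      set f3 : ℝ → Module.End ℂ S := fun t =>
        c Z * Q (fun _ => Y + t • u') + Q (fun _ => Y + t • u') * c Z with hf3
      have hPF3 : AuxIsPF f3 := by
        have hQm : AuxIsPF (fun t => Q (fun _ => Y + t • u')) := AuxIsPF.multi Q Y u'
        exact ((AuxIsPF.const (c Z)).mul hQm).add (hQm.mul (AuxIsPF.const (c Z)))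
      have hvan3 : ∀ t ∈ Set.Ioo (0:ℝ) δ, f3 t = 0 := by
        intro t ht
        obtain ⟨ht1, ht2⟩ := ht
        have hgtt : g (Y + t • u') (Y + t • u') ≠ 0 := by
          rw [gexp, hYY, hYu']
          have habs : t * |g u' u'| < 1 := by
            have : t * (|g u' u'| + 1) < δ * (|g u' u'| + 1) := by
              apply mul_lt_mul_of_pos_right ht2
              positivity
            rw [hδ] at this
            rw [div_mul_cancel₀] at this
            · nlinarith
            · positivity
          have hb : -(t * |g u' u'|) ≤ t * g u' u' := by
            rw [← mul_neg]
            exact mul_le_mul_of_nonneg_left (neg_abs_le _) (le_of_lt ht1)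
          nlinarith
        have hgtZ : g (Y + t • u') Z = 0 := by
          rw [gexp2, hYZ, hu'Z, mul_zero, add_zero]
        have h := key2 (Y + t • u') Z
        rw [hgtZ, zero_smul] at h
        rcases smul_eq_zero.1 h with h' | h'
        · exact absurd h' hgtt
        · rw [hf3]
          exact h'
      have hinf3 : {t : ℝ | f3 t = 0}.Infinite := by
        apply Set.Infinite.mono (s := Set.Ioo (0:ℝ) δ)
        · exact hvan3
        · exact Set.Ioo_infinite hδpos
      have h0 := hPF3.vanish hinf3 0
      rw [hf3] at h0
      dsimp only at h0
      simp only [zero_smul, add_zero] at h0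
      rw [hQY]
      exact h0
    · -- every vector orthogonal to Z is orthogonal to Y: then Y ∥ Z
      push_neg at hu
      have hZW := hWne Z hZ0
      set μ : ℝ := g Y (W Z) / g Z (W Z) with hμ
      have hx : ∀ x, g Y x = μ * g Z x := by
        intro x
        have hc1 : g (x - (g x Z / g Z (W Z)) • W Z) Z = 0 := by
          rw [gsubl, gsymm (W Z) Z, div_mul_cancel₀ _ hZW, sub_self]
        have h := hu _ hc1
        rw [gsubr, sub_eq_zero] at h
        rw [hμ, gsymm Z x, h]
        ring
      have hv0 : Y - μ • Z = 0 := by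
        apply hWzero
        rw [gsubl, hx, sub_self]
      have hYmuZ : Y = μ • Z := by
        rwa [sub_eq_zero] at hv0
      have hμne : μ ≠ 0 := by
        intro h
        rw [h, zero_smul] at hYmuZ
        exact hY0 hYmuZ
      have hZY : Z = μ⁻¹ • Y := by
        rw [hYmuZ, smul_smul, inv_mul_cancel₀ hμne, one_smul]
      rw [hZY, map_smul, smul_mul_assoc, mul_smul_comm, ← smul_add, hQY, hAYY, smul_zero]
  · -- g Y Y ≠ 0
    have h := key2 Y Z
    rw [hYZ, zero_smul] at h
    rcases smul_eq_zero.1 h with h' | h'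
    · exact absurd h' hYY
    · rw [hQY]
      exact h'
end

section
/- Let V = ℝ^{n+1} with n ≥ 1, equipped with the Minkowski bilinear form g(x,y) = x₀y₀ − Σ_{i=1}^{n} xᵢyᵢ. Let S be a finite-dimensional complex vector space, let c : V → End(S) be an ℝ-linear map satisfying c(v)∘c(w) + c(w)∘c(v) = −2·g(v,w)·Id for all v,w ∈ V, let k ≥ 1, and let Q : V^k → End(S) be a symmetric ℝ-multilinear map; write Q_N := Q(N,…,N). Assume that for every future-directed timelike vector N (i.e. g(N,N) > 0 and N₀ > 0) one has c(N)∘Q_N = Q_N∘c(N). Then for EVERY vector Z ∈ V one has c(Z)∘Q_Z = Q_Z∘c(Z). -/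
/-- On Minkowski space `ℝ^{n+1}` (n ≥ 1) with a Clifford action `c` on a
finite-dimensional complex vector space `S` and a symmetric multilinear `Q : V^k → End(S)`,
if Clifford multiplication by any future-directed timelike vector `N` commutes with
`Q_N := Q(N,…,N)` (axiom C7(2)), then for EVERY vector `Z` one has
`c(Z) ∘ Q_Z = Q_Z ∘ c(Z)` (property C7'(2)). -/
theorem C7_commute_extends_to_all_vectors
    {n k : ℕ} (hn : 1 ≤ n) (hk : 1 ≤ k)
    {S : Type*} [AddCommGroup S] [Module ℝ S] [Module ℂ S] [IsScalarTower ℝ ℂ S]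
    [FiniteDimensional ℂ S]
    (g : (Fin (n + 1) → ℝ) → (Fin (n + 1) → ℝ) → ℝ)
    (hg : ∀ x y : Fin (n + 1) → ℝ, g x y = x 0 * y 0 - ∑ i : Fin n, x i.succ * y i.succ)
    (c : (Fin (n + 1) → ℝ) →ₗ[ℝ] Module.End ℂ S)
    (hc : ∀ v w : Fin (n + 1) → ℝ,
      c v * c w + c w * c v = (-(2 * g v w)) • (1 : Module.End ℂ S))
    (Q : MultilinearMap ℝ (fun _ : Fin k => (Fin (n + 1) → ℝ)) (Module.End ℂ S))
    (hQ_symm : ∀ (σ : Equiv.Perm (Fin k)) (v : Fin k → Fin (n + 1) → ℝ), Q (v ∘ σ) = Q v)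
    (hC7 : ∀ N : Fin (n + 1) → ℝ, g N N > 0 → N 0 > 0 →
      c N * Q (fun _ => N) = Q (fun _ => N) * c N) :
    ∀ Z : Fin (n + 1) → ℝ, c Z * Q (fun _ => Z) = Q (fun _ => Z) * c Z := by
  classical
  intro Z
  set N : Fin (n + 1) → ℝ := fun i => if i = 0 then 1 else 0 with hN
  have hN0 : N 0 = 1 := by simp [hN]
  have hNs : ∀ i : Fin n, N i.succ = 0 := by
    intro i; simp [hN, Fin.succ_ne_zero]
  set A : Finset (Fin k) → Module.End ℂ S :=
    fun s => Q (s.piecewise (fun _ => N) (fun _ => Z)) with hA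
  have hAe : A ∅ = Q (fun _ => Z) := by simp [hA]
  -- expansion of Q at t • N + Z
  have hexp : ∀ t : ℝ, Q (fun _ => t • N + Z) = ∑ s : Finset (Fin k), t ^ s.card • A s := by
    intro t
    have h1 : (fun _ : Fin k => t • N + Z) = (fun _ => t • N) + (fun _ => Z) := rfl
    rw [h1, Q.map_add_univ]
    refine Finset.sum_congr rfl fun s _ => ?_
    have h2 : s.piecewise (fun _ : Fin k => t • N) (fun _ => Z)
        = s.piecewise (fun i => (fun _ : Fin k => t) i •
            (s.piecewise (fun _ : Fin k => N) (fun _ => Z)) i)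
            (s.piecewise (fun _ : Fin k => N) (fun _ => Z)) := by
      funext i
      by_cases hi : i ∈ s <;> simp [Finset.piecewise, hi]
    rw [h2, Q.map_piecewise_smul]
    simp [hA]
  -- threshold
  set M : ℝ := ∑ i : Fin n, (Z i.succ) ^ 2 with hM
  have hM0 : 0 ≤ M := Finset.sum_nonneg fun i _ => sq_nonneg _
  set t₀ : ℝ := 1 + |Z 0| + M with ht₀
  have hvanish : ∀ t : ℝ, t₀ < t →
      c (t • N + Z) * Q (fun _ => t • N + Z) = Q (fun _ => t • N + Z) * c (t • N + Z) := by
    intro t ht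
    have habs : Z 0 ≥ -|Z 0| := neg_abs_le _
    have h0 : (t • N + Z) 0 = t + Z 0 := by simp [hN0]
    have hpos : (t • N + Z) 0 > 0 := by rw [h0]; simp only [ht₀] at ht; linarith
    apply hC7
    · rw [hg]
      have hs : ∀ i : Fin n, (t • N + Z) i.succ = Z i.succ := by
        intro i; simp [hNs i]
      rw [h0]
      have : ∑ i : Fin n, (t • N + Z) i.succ * (t • N + Z) i.succ = M := by
        rw [hM]; exact Finset.sum_congr rfl fun i _ => by rw [hs i]; ring
      rw [this]
      have h1 : t + Z 0 > 1 + M := by simp only [ht₀] at ht; linarith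
      nlinarith
    · exact hpos
  -- dual separation
  have hsep : ∀ φ : Module.Dual ℝ (Module.End ℂ S),
      φ (c Z * Q (fun _ => Z) - Q (fun _ => Z) * c Z) = 0 := by
    intro φ
    set q : Polynomial ℝ := ∑ s : Finset (Fin k),
      (Polynomial.C (φ (c N * A s - A s * c N)) * Polynomial.X ^ (s.card + 1)
        + Polynomial.C (φ (c Z * A s - A s * c Z)) * Polynomial.X ^ s.card) with hq
    have hroot : ∀ t : ℝ, t₀ < t → q.eval t = 0 := by
      intro t ht
      have hz : c (t • N + Z) * Q (fun _ => t • N + Z)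
          - Q (fun _ => t • N + Z) * c (t • N + Z) = 0 :=
        sub_eq_zero.mpr (hvanish t ht)
      have hc' : c (t • N + Z) = t • c N + c Z := by
        rw [map_add, map_smul]
      rw [hc', hexp t] at hz
      have hz2 : (∑ s : Finset (Fin k),
          (t ^ (s.card + 1) • (c N * A s - A s * c N)
            + t ^ s.card • (c Z * A s - A s * c Z))) = 0 := by
        rw [← hz]
        rw [Finset.mul_sum, Finset.sum_mul, ← Finset.sum_sub_distrib]
        refine Finset.sum_congr rfl fun s _ => ?_
        simp only [smul_sub, mul_smul_comm, smul_mul_assoc, add_mul, mul_add, smul_smul,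
          smul_add, pow_succ]
        module
      have := congrArg φ hz2
      simp only [map_sum, map_add, map_smul, map_zero] at this
      simp only [hq, Polynomial.eval_finset_sum, Polynomial.eval_add, Polynomial.eval_mul,
        Polynomial.eval_C, Polynomial.eval_pow, Polynomial.eval_X]
      rw [← this]
      refine Finset.sum_congr rfl fun s _ => ?_
      simp only [smul_eq_mul]; ring
    have hqz : q = 0 := by
      apply Polynomial.eq_zero_of_infinite_isRoot
      apply Set.Infinite.mono (s := Set.Ioi t₀)
      · intro t ht; exact hroot t ht
      · exact Set.Ioi_infinite t₀
    have := congrArg (fun p => Polynomial.coeff p 0) hqz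
    simp only [hq, Polynomial.finset_sum_coeff, Polynomial.coeff_add, Polynomial.coeff_C_mul,
      Polynomial.coeff_X_pow, Polynomial.coeff_zero] at this
    rw [← this]
    have : ∀ s : Finset (Fin k),
        φ (c N * A s - A s * c N) * (if 0 = s.card + 1 then (1:ℝ) else 0)
          + φ (c Z * A s - A s * c Z) * (if 0 = s.card then (1:ℝ) else 0)
        = if s = ∅ then φ (c Z * A s - A s * c Z) else 0 := by
      intro s
      by_cases hs : s = ∅
      · subst hs; simp
      · have : s.card ≠ 0 := fun h => hs (Finset.card_eq_zero.mp h)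
        simp [Ne.symm this, hs]
    rw [Finset.sum_congr rfl fun s _ => this s, Finset.sum_ite_eq' Finset.univ ∅]
    simp [hAe]
  have := (Module.forall_dual_apply_eq_zero_iff ℝ
    (c Z * Q (fun _ => Z) - Q (fun _ => Z) * c Z)).mp hsep
  exact sub_eq_zero.mp this
end
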